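/- arXiv:2512.10456 — 10 statements merged into one kernel-verified Lean document; each statement's English description precedes it below -/
import Mathlib

section
/- Assume φ ∈ (0,1), ω > 0, μ > 0, b > 0 and r := bφ − μ(1−φ) > 0, and set ρ* := (1 − e^{μ(1−φ)ω − bφω})/(1 − e^{−bφω}). Then 0 < ρ* < 1, and there exists a continuous function v : [0, ω] → ℝ with v(0) = v(ω) = ρ* and v(t) > 0 for all t ∈ [0, ω], such that v has derivative −μ·v(t) at every t ∈ (0, (1−φ)ω) and derivative b·v(t)·(1 − v(t)) at every t ∈ ((1−φ)ω, ω). In other words, ρ* is a positive fixed point of the Poincaré map of the logistic equation with seasonal succession. -/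
/-!
During the death phase of length `τ = (1-φ)ω` the state is multiplied by `l = e^{-μτ}`; the logistic phase
of length `T = φω` maps `y₀` to `y₀ / (y₀ + (1 - y₀) e^{-bT})`. With `ρ = (1 - e^{μτ - bT}) / (1 - e^{-bT})`
one checks `ρl + (1 - ρl) e^{-bT} = l`, so one season maps `ρ` back to `ρ`. Positivity of
`r = bφ - μ(1-φ)` says `μτ < bT`, i.e. `e^{-bT} < e^{μτ - bT} < 1`, which puts `ρ` in `(0, 1)`.
-/

open Real Set

noncomputable section

def logisticFlow (b y₀ s : ℝ) : ℝ :=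
  y₀ / (y₀ + (1 - y₀) * exp (-(b * s)))

/-- The paper's `ρ*` for a death phase of length `τ` followed by a growth phase of length `T`. -/
def seasonalFixedPoint (μ b τ T : ℝ) : ℝ :=
  (1 - exp (μ * τ - b * T)) / (1 - exp (-(b * T)))

def seasonalSolution (μ b τ ρ t : ℝ) : ℝ :=
  if t ≤ τ then ρ * exp (-(μ * t)) else logisticFlow b (ρ * exp (-(μ * τ))) (t - τ)

end

section LogisticFlow

variable {b y₀ : ℝ}

theorem logisticFlow_zero (b y₀ : ℝ) : logisticFlow b y₀ 0 = y₀ := by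
  simp [logisticFlow]

theorem logisticFlow_denom_pos (hy₀ : y₀ ∈ Icc 0 1) (s : ℝ) :
    0 < y₀ + (1 - y₀) * exp (-(b * s)) := by
  obtain ⟨h0, h1⟩ := hy₀
  rcases h0.lt_or_eq with h0 | rfl
  · nlinarith [exp_pos (-(b * s))]
  · simpa using exp_pos (-(b * s))

theorem logisticFlow_pos (hy₀ : 0 < y₀) (hy₁ : y₀ ≤ 1) (s : ℝ) : 0 < logisticFlow b y₀ s :=
  div_pos hy₀ (logisticFlow_denom_pos ⟨hy₀.le, hy₁⟩ s)

theorem continuous_logisticFlow (hy₀ : y₀ ∈ Icc 0 1) : Continuous (logisticFlow b y₀) :=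
  continuous_const.div (by fun_prop) fun s ↦ (logisticFlow_denom_pos hy₀ s).ne'

theorem hasDerivAt_logisticFlow (hy₀ : y₀ ∈ Icc 0 1) (s : ℝ) :
    HasDerivAt (logisticFlow b y₀)
      (b * logisticFlow b y₀ s * (1 - logisticFlow b y₀ s)) s := by
  have hD := (logisticFlow_denom_pos (b := b) hy₀ s).ne'
  have hE : HasDerivAt (fun s ↦ exp (-(b * s))) (exp (-(b * s)) * -b) s := by
    simpa using ((hasDerivAt_id s).const_mul b).neg.exp
  refine ((hasDerivAt_const s y₀).div ((hE.const_mul (1 - y₀)).const_add y₀) hD).congr_deriv ?_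
  simp only [logisticFlow]
  field_simp
  ring

end LogisticFlow

theorem logisticFlow_seasonalFixedPoint {μ b τ T : ℝ} (hbT : b * T ≠ 0) :
    logisticFlow b (seasonalFixedPoint μ b τ T * exp (-(μ * τ))) T =
      seasonalFixedPoint μ b τ T := by
  set ρ := seasonalFixedPoint μ b τ T
  have hB : 1 - exp (-(b * T)) ≠ 0 :=
    sub_ne_zero.mpr fun h ↦ hbT <| neg_eq_zero.mp <| exp_eq_one_iff _ |>.mp h.symm
  have hρ : ρ * (1 - exp (-(b * T))) = 1 - exp (μ * τ - b * T) := div_mul_cancel₀ _ hB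
  have hsplit : exp (-(b * T)) = exp (μ * τ - b * T) * exp (-(μ * τ)) := by
    rw [← exp_add]; ring_nf
  have hdenom : ρ * exp (-(μ * τ)) + (1 - ρ * exp (-(μ * τ))) * exp (-(b * T)) =
      exp (-(μ * τ)) := by
    linear_combination exp (-(μ * τ)) * hρ + hsplit
  rw [logisticFlow, hdenom, mul_div_cancel_right₀ _ (exp_pos _).ne']

theorem seasonalFixedPoint_mem_Ioo {μ b τ T : ℝ} (hμτ : 0 < μ * τ) (hbT : μ * τ < b * T) :
    seasonalFixedPoint μ b τ T ∈ Ioo 0 1 := by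
  have hA : exp (μ * τ - b * T) < 1 := exp_lt_one_iff.mpr (by linarith)
  have hBA : exp (-(b * T)) < exp (μ * τ - b * T) := exp_lt_exp.mpr (by linarith)
  exact ⟨div_pos (by linarith) (by linarith), (div_lt_one (by linarith)).mpr (by linarith)⟩

section SeasonalSolution

variable {μ b τ ρ : ℝ}

theorem seasonalSolution_of_le {t : ℝ} (ht : t ≤ τ) :
    seasonalSolution μ b τ ρ t = ρ * exp (-(μ * t)) := if_pos ht

theorem seasonalSolution_of_lt {t : ℝ} (ht : τ < t) :
    seasonalSolution μ b τ ρ t = logisticFlow b (ρ * exp (-(μ * τ))) (t - τ) :=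
  if_neg ht.not_ge

theorem continuous_seasonalSolution (hρ : ρ * exp (-(μ * τ)) ∈ Icc 0 1) :
    Continuous (seasonalSolution μ b τ ρ) := by
  refine Continuous.if_le (by fun_prop)
    ((continuous_logisticFlow hρ).comp (continuous_sub_right τ)) continuous_id continuous_const ?_
  rintro t rfl
  simp [logisticFlow_zero]

theorem seasonalSolution_pos (hρ₀ : 0 < ρ) (hρ₁ : ρ * exp (-(μ * τ)) ≤ 1) (t : ℝ) :
    0 < seasonalSolution μ b τ ρ t := by
  unfold seasonalSolution
  split_ifs
  · positivity
  · exact logisticFlow_pos (by positivity) hρ₁ _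

theorem hasDerivAt_seasonalSolution_of_lt {t : ℝ} (ht : t < τ) :
    HasDerivAt (seasonalSolution μ b τ ρ) (-μ * seasonalSolution μ b τ ρ t) t := by
  have hexp : HasDerivAt (fun t ↦ ρ * exp (-(μ * t))) (-μ * (ρ * exp (-(μ * t)))) t := by
    refine ((((hasDerivAt_id t).const_mul μ).neg.exp).const_mul ρ).congr_deriv ?_
    simp only [Pi.neg_apply, id, mul_one]
    ring
  rw [seasonalSolution_of_le ht.le]
  exact hexp.congr_of_eventuallyEq <| (eventually_le_nhds ht).mono fun _ ↦ seasonalSolution_of_le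

theorem hasDerivAt_seasonalSolution_of_gt (hρ : ρ * exp (-(μ * τ)) ∈ Icc 0 1) {t : ℝ}
    (ht : τ < t) :
    HasDerivAt (seasonalSolution μ b τ ρ)
      (b * seasonalSolution μ b τ ρ t * (1 - seasonalSolution μ b τ ρ t)) t := by
  have hflow := (hasDerivAt_logisticFlow (b := b) hρ (t - τ)).comp t
    ((hasDerivAt_id t).sub_const τ)
  rw [seasonalSolution_of_lt ht]
  simpa using hflow.congr_of_eventuallyEq <|
    (eventually_gt_nhds ht).mono fun _ ↦ seasonalSolution_of_lt

end SeasonalSolution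

/-- The value ρ* is a positive fixed point of the Poincaré map of the
logistic equation with seasonal succession: `0 < ρ* < 1` and there is a continuous
function `v` on `[0, ω]` with `v 0 = v ω = ρ*`, positive on `[0, ω]`, solving
`v' = -μ v` on `(0, (1-φ)ω)` and `v' = b v (1 - v)` on `((1-φ)ω, ω)`. -/
theorem stmt_0 (φ ω μ b r ρs : ℝ)
    (hφ0 : 0 < φ) (hφ1 : φ < 1) (hω : 0 < ω) (hμ : 0 < μ) (hb : 0 < b)
    (hr : r = b * φ - μ * (1 - φ)) (hrpos : 0 < r)
    (hρs : ρs = (1 - Real.exp (μ * (1 - φ) * ω - b * φ * ω)) /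
      (1 - Real.exp (-(b * φ * ω)))) :
    0 < ρs ∧ ρs < 1 ∧
      ∃ v : ℝ → ℝ,
        ContinuousOn v (Set.Icc 0 ω) ∧
        v 0 = ρs ∧ v ω = ρs ∧
        (∀ t ∈ Set.Icc (0 : ℝ) ω, 0 < v t) ∧
        (∀ t ∈ Set.Ioo (0 : ℝ) ((1 - φ) * ω), HasDerivAt v (-μ * v t) t) ∧
        (∀ t ∈ Set.Ioo ((1 - φ) * ω) ω, HasDerivAt v (b * v t * (1 - v t)) t) := by
  have hρs' : ρs = seasonalFixedPoint μ b ((1 - φ) * ω) (φ * ω) := by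
    simp only [hρs, seasonalFixedPoint, mul_assoc]
  obtain ⟨hρ₀, hρ₁⟩ : ρs ∈ Ioo 0 1 := hρs' ▸
    seasonalFixedPoint_mem_Ioo (by positivity) (by nlinarith)
  have hτ : 0 < (1 - φ) * ω := mul_pos (by linarith) hω
  have hl : ρs * exp (-(μ * ((1 - φ) * ω))) ∈ Icc 0 1 :=
    ⟨by positivity, mul_le_one₀ hρ₁.le (exp_pos _).le (exp_le_one_iff.mpr (by nlinarith))⟩
  refine ⟨hρ₀, hρ₁, seasonalSolution μ b ((1 - φ) * ω) ρs,
    (continuous_seasonalSolution hl).continuousOn, by simp [seasonalSolution_of_le hτ.le], ?_,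
    fun t _ ↦ seasonalSolution_pos hρ₀ hl.2 t, fun t ht ↦ hasDerivAt_seasonalSolution_of_lt ht.2,
    fun t ht ↦ hasDerivAt_seasonalSolution_of_gt hl ht.1⟩
  rw [seasonalSolution_of_lt (by nlinarith), show ω - (1 - φ) * ω = φ * ω by ring, hρs']
  exact logisticFlow_seasonalFixedPoint (by positivity)
end

section
/- Assume φ ∈ (0,1), ω > 0, μ > 0, b > 0 and r := bφ − μ(1−φ) > 0. Set l := e^{−μ(1−φ)ω}, ρ* := (1 − e^{μ(1−φ)ω − bφω})/(1 − e^{−bφω}), and define M : [0,∞) → ℝ by M(y) = e^{rω} y / (1 + l(e^{bφω} − 1) y). Then for every y > 0 the iterates M^k(y) converge to ρ* as k → ∞. (The map M is the Poincaré map of the logistic equation with seasonal succession, and ρ* is its globally attracting positive fixed point.) -/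
/-!
The Poincaré map is a Beverton–Holt map `x ↦ A x / (1 + B x)` with `A = e^{rω} > 1` and
`B = l (e^{bφω} - 1) > 0`. In the reciprocal variable `u = 1 / x` it becomes the affine contraction
`u ↦ u / A + B / A`, whose iterates converge to its fixed point `B / (A - 1)`; hence the iterates
of the map converge to `(A - 1) / B`, which is `ρ*`.
-/

open Filter Topology

lemma tendsto_of_affine_recurrence {c d p : ℝ} (hc : |c| < 1) (hp : c * p + d = p)
    {u : ℕ → ℝ} (hu : ∀ k, u (k + 1) = c * u k + d) :
    Tendsto u atTop (𝓝 p) := by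
  have hform : ∀ k, u k = p + c ^ k * (u 0 - p) := by
    intro k
    induction k with
    | zero => simp
    | succ k ih => rw [hu, ih, pow_succ]; linear_combination hp
  have hlim : Tendsto (fun k => p + c ^ k * (u 0 - p)) atTop (𝓝 (p + 0 * (u 0 - p))) :=
    ((tendsto_pow_atTop_nhds_zero_of_abs_lt_one hc).mul_const _).const_add p
  simpa [← funext hform] using hlim

section BevertonHolt

variable {A B : ℝ} {M : ℝ → ℝ} (hM : ∀ x, 0 < x → M x = A * x / (1 + B * x))
include hM

lemma iterate_pos_of_bevertonHolt (hA : 0 < A) (hB : 0 ≤ B) {x : ℝ} (hx : 0 < x) (k : ℕ) :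
    0 < M^[k] x := by
  induction k with
  | zero => exact hx
  | succ k ih =>
    rw [Function.iterate_succ_apply', hM _ ih]
    positivity

lemma inv_bevertonHolt (hA : 0 < A) (hB : 0 ≤ B) {x : ℝ} (hx : 0 < x) :
    (M x)⁻¹ = A⁻¹ * x⁻¹ + B / A := by
  rw [hM x hx]
  field_simp

theorem tendsto_iterate_bevertonHolt (hA : 1 < A) (hB : 0 < B) {x : ℝ} (hx : 0 < x) :
    Tendsto (fun k : ℕ => M^[k] x) atTop (𝓝 ((A - 1) / B)) := by
  have hA0 : 0 < A := by linarith
  have hinv : Tendsto (fun k : ℕ => (M^[k] x)⁻¹) atTop (𝓝 (B / (A - 1))) := by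
    refine tendsto_of_affine_recurrence (c := A⁻¹) (d := B / A) ?_ ?_ fun k => ?_
    · rw [abs_of_pos (inv_pos.mpr hA0)]
      exact inv_lt_one_of_one_lt₀ hA
    · have : A - 1 ≠ 0 := by linarith
      field_simp
      ring
    · rw [Function.iterate_succ_apply', inv_bevertonHolt hM hA0 hB.le
        (iterate_pos_of_bevertonHolt hM hA0 hB.le hx k)]
  simpa using hinv.inv₀ (div_pos hB (by linarith)).ne'

end BevertonHolt

theorem stmt_2_general (φ ω μ b r l ρs : ℝ)
    (hφ0 : 0 < φ) (hω : 0 < ω) (hb : 0 < b)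
    (hr : r = b * φ - μ * (1 - φ)) (hrpos : 0 < r)
    (hl : l = Real.exp (-(μ * (1 - φ) * ω)))
    (hρs : ρs = (1 - Real.exp (μ * (1 - φ) * ω - b * φ * ω)) /
      (1 - Real.exp (-(b * φ * ω))))
    (M : ℝ → ℝ)
    (hM : ∀ y : ℝ, 0 ≤ y →
      M y = Real.exp (r * ω) * y / (1 + l * (Real.exp (b * φ * ω) - 1) * y)) :
    ∀ y : ℝ, 0 < y →
      Filter.Tendsto (fun k : ℕ => M^[k] y) Filter.atTop (nhds ρs) := by
  intro y hy
  have hgrowth : 1 < Real.exp (b * φ * ω) := Real.one_lt_exp_iff.mpr (by positivity)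
  have hA : 1 < Real.exp (r * ω) := Real.one_lt_exp_iff.mpr (by positivity)
  have hB : 0 < l * (Real.exp (b * φ * ω) - 1) := by
    rw [hl]
    exact mul_pos (Real.exp_pos _) (by linarith)
  have hρ : ρs = (Real.exp (r * ω) - 1) / (l * (Real.exp (b * φ * ω) - 1)) := by
    have hrω : r * ω = b * φ * ω - μ * (1 - φ) * ω := by rw [hr]; ring
    have : Real.exp (b * φ * ω) - 1 ≠ 0 := by linarith
    rw [hρs, hl, hrω, Real.exp_sub, Real.exp_sub, Real.exp_neg, Real.exp_neg]
    field_simp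
  rw [hρ]
  exact tendsto_iterate_bevertonHolt (fun x hx => hM x hx.le) hA hB hy

/-- When `r = bφ - μ(1-φ) > 0`, the iterates of the Poincaré map
`M y = e^{rω} y / (1 + l(e^{bφω} - 1) y)` of the seasonal logistic equation converge
to the globally attracting positive fixed point `ρ*` for every `y > 0`. -/
theorem stmt_2 (φ ω μ b r l ρs : ℝ)
    (hφ0 : 0 < φ) (hφ1 : φ < 1) (hω : 0 < ω) (hμ : 0 < μ) (hb : 0 < b)
    (hr : r = b * φ - μ * (1 - φ)) (hrpos : 0 < r)
    (hl : l = Real.exp (-(μ * (1 - φ) * ω)))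
    (hρs : ρs = (1 - Real.exp (μ * (1 - φ) * ω - b * φ * ω)) /
      (1 - Real.exp (-(b * φ * ω))))
    (M : ℝ → ℝ)
    (hM : ∀ y : ℝ, 0 ≤ y →
      M y = Real.exp (r * ω) * y / (1 + l * (Real.exp (b * φ * ω) - 1) * y)) :
    ∀ y : ℝ, 0 < y →
      Filter.Tendsto (fun k : ℕ => M^[k] y) Filter.atTop (nhds ρs) :=
  stmt_2_general φ ω μ b r l ρs hφ0 hω hb hr hrpos hl hρs M hM
end

section
/- Assume φ ∈ (0,1), ω > 0, μ > 0, b > 0 and r := bφ − μ(1−φ) ≤ 0. Set l := e^{−μ(1−φ)ω} and define M : [0,∞) → ℝ by M(y) = e^{rω} y / (1 + l(e^{bφω} − 1) y). Then for every y ≥ 0 the iterates M^k(y) converge to 0 as k → ∞. (If the average growth rate r is nonpositive, the species governed by the seasonal logistic equation is driven to extinction.) -/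
/-- When the average growth rate `r = bφ - μ(1-φ)` is nonpositive, the
iterates of the Poincaré map `M y = e^{rω} y / (1 + l(e^{bφω} - 1) y)` of the seasonal
logistic equation converge to `0` for every `y ≥ 0` (extinction). -/
theorem stmt_3 (φ ω μ b r l : ℝ)
    (hφ0 : 0 < φ) (hφ1 : φ < 1) (hω : 0 < ω) (hμ : 0 < μ) (hb : 0 < b)
    (hr : r = b * φ - μ * (1 - φ)) (hrneg : r ≤ 0)
    (hl : l = Real.exp (-(μ * (1 - φ) * ω)))
    (M : ℝ → ℝ)
    (hM : ∀ y : ℝ, 0 ≤ y →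
      M y = Real.exp (r * ω) * y / (1 + l * (Real.exp (b * φ * ω) - 1) * y)) :
    ∀ y : ℝ, 0 ≤ y →
      Filter.Tendsto (fun k : ℕ => M^[k] y) Filter.atTop (nhds 0) := by
  intro y hy
  set a : ℝ := Real.exp (r * ω) with ha
  set c : ℝ := l * (Real.exp (b * φ * ω) - 1) with hc
  have hc0 : 0 < c := by
    apply mul_pos
    · rw [hl]; exact Real.exp_pos _
    · have : (1 : ℝ) < Real.exp (b * φ * ω) := by
        rw [show (1:ℝ) = Real.exp 0 by simp]
        exact Real.exp_lt_exp.mpr (by positivity)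
      linarith
  have ha0 : 0 < a := Real.exp_pos _
  have ha1 : a ≤ 1 := by
    rw [ha, Real.exp_le_one_iff]
    exact mul_nonpos_of_nonpos_of_nonneg hrneg hω.le
  -- key induction: 0 ≤ M^[k] y and M^[k] y ≤ y / (1 + k*c*y)
  have key : ∀ k : ℕ, 0 ≤ M^[k] y ∧ M^[k] y ≤ y / (1 + (k : ℝ) * c * y) := by
    intro k
    induction k with
    | zero => simp [hy]
    | succ n ih =>
      obtain ⟨hz0, hzle⟩ := ih
      set z := M^[n] y with hz
      have hiter : M^[n + 1] y = M z := by
        rw [Function.iterate_succ_apply']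
      have hden : 0 < 1 + c * z := by nlinarith
      have hMz : M z = a * z / (1 + c * z) := hM z hz0
      have hdenw : 0 < 1 + (n : ℝ) * c * y := by
        have : 0 ≤ (n : ℝ) * c * y := by positivity
        linarith
      have hdenw' : 0 < 1 + ((n : ℝ) + 1) * c * y := by
        have : 0 ≤ ((n : ℝ) + 1) * c * y := by positivity
        linarith
      constructor
      · rw [hiter, hMz]; positivity
      · rw [hiter, hMz]
        push_cast
        rw [div_le_div_iff₀ hden hdenw']
        -- a * z * (1 + (n+1)cy) ≤ y * (1 + cz)
        -- use z ≤ y/(1+ncy), i.e. z*(1+ncy) ≤ y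
        have hzy : z * (1 + (n : ℝ) * c * y) ≤ y := by
          rw [div_eq_mul_inv] at hzle
          calc z * (1 + (n : ℝ) * c * y)
              ≤ (y * (1 + (n : ℝ) * c * y)⁻¹) * (1 + (n : ℝ) * c * y) := by
                apply mul_le_mul_of_nonneg_right hzle hdenw.le
            _ = y := by field_simp
        nlinarith [mul_nonneg (mul_nonneg hc0.le hz0) hy,
          mul_nonneg hz0 hy, mul_pos hc0 hdenw]
  -- squeeze
  by_cases hy0 : y = 0
  · subst hy0
    have : ∀ k : ℕ, M^[k] (0:ℝ) = 0 := by
      intro k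
      induction k with
      | zero => simp
      | succ n ih =>
        rw [Function.iterate_succ_apply', ih, hM 0 le_rfl]
        simp
    simpa [this] using tendsto_const_nhds
  · have hy' : 0 < y := lt_of_le_of_ne hy (Ne.symm hy0)
    have hbound : Filter.Tendsto (fun k : ℕ => y / (1 + (k : ℝ) * c * y))
        Filter.atTop (nhds 0) := by
      apply Filter.Tendsto.div_atTop tendsto_const_nhds
      have h1 : Filter.Tendsto (fun k : ℕ => (k : ℝ) * (c * y)) Filter.atTop
          Filter.atTop :=
        Filter.Tendsto.atTop_mul_const (mul_pos hc0 hy') tendsto_natCast_atTop_atTop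
      have := Filter.tendsto_atTop_add_const_left Filter.atTop 1 h1
      simpa [mul_assoc] using this
    exact squeeze_zero (fun k => (key k).1) (fun k => (key k).2) hbound
end

section
/- Let b ∈ ℝ and let A = (a_{ij}) be a real 3×3 matrix. Suppose ρ : ℝ → ℝ satisfies ρ'(t) = b ρ(t)(1 − ρ(t)) at every t ∈ ℝ, and u : ℝ → ℝ³ satisfies the Lotka–Volterra competition system u_i'(t) = u_i(t)(b − Σ_{j=1}^{3} a_{ij} u_j(t)), i = 1,2,3, at every t ∈ ℝ. Define w : ℝ → ℝ³ by w(t) = ρ(t) · u(∫₀^t ρ(s) ds). Then w(0) = ρ(0)·u(0) and w also satisfies the Lotka–Volterra competition system at every t ∈ ℝ, i.e., w_i'(t) = w_i(t)(b − Σ_{j=1}^{3} a_{ij} w_j(t)) for all t and i. -/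
/-- Time-change/scaling identity for the Lotka–Volterra competition system.
If `ρ` solves the logistic ODE `ρ' = b ρ (1 - ρ)` on ℝ and `u` solves the Lotka–Volterra
system `uᵢ' = uᵢ (b - ∑ⱼ aᵢⱼ uⱼ)` on ℝ, then `w t = ρ t • u (∫₀ᵗ ρ)` satisfies
`w 0 = ρ 0 • u 0` and solves the same Lotka–Volterra system on ℝ. -/
theorem stmt_4 (b : ℝ) (A : Matrix (Fin 3) (Fin 3) ℝ)
    (ρ : ℝ → ℝ) (u : ℝ → Fin 3 → ℝ)
    (hρ : ∀ t : ℝ, HasDerivAt ρ (b * ρ t * (1 - ρ t)) t)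
    (hu : ∀ t : ℝ, ∀ i : Fin 3,
      HasDerivAt (fun s => u s i) (u t i * (b - ∑ j : Fin 3, A i j * u t j)) t)
    (w : ℝ → Fin 3 → ℝ)
    (hw : ∀ t : ℝ, ∀ i : Fin 3, w t i = ρ t * u (∫ s in (0:ℝ)..t, ρ s) i) :
    (∀ i : Fin 3, w 0 i = ρ 0 * u 0 i) ∧
      ∀ t : ℝ, ∀ i : Fin 3,
        HasDerivAt (fun s => w s i) (w t i * (b - ∑ j : Fin 3, A i j * w t j)) t := by
  have hρc : Continuous ρ := continuous_iff_continuousAt.2 fun t => (hρ t).continuousAt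
  set τ : ℝ → ℝ := fun t => ∫ s in (0:ℝ)..t, ρ s with hτ
  have hτd : ∀ t : ℝ, HasDerivAt τ (ρ t) t := fun t =>
    intervalIntegral.integral_hasDerivAt_right (hρc.intervalIntegrable _ _)
      (hρc.stronglyMeasurableAtFilter _ _) hρc.continuousAt
  constructor
  · intro i
    have := hw 0 i
    simpa using this
  · intro t i
    have hwd : HasDerivAt (fun s => w s i)
        (b * ρ t * (1 - ρ t) * u (τ t) i +
          ρ t * (u (τ t) i * (b - ∑ j : Fin 3, A i j * u (τ t) j) * ρ t)) t := by
      have h1 : HasDerivAt (fun s => u (τ s) i)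
          (u (τ t) i * (b - ∑ j : Fin 3, A i j * u (τ t) j) * ρ t) t :=
        (hu (τ t) i).comp t (hτd t)
      have h2 := (hρ t).mul h1
      have : (fun s => w s i) = fun s => ρ s * u (τ s) i := funext fun s => hw s i
      rw [this]
      exact h2
    convert hwd using 1
    rw [hw t i]
    have hsum : ∑ j : Fin 3, A i j * (ρ t * u (τ t) j)
        = ρ t * ∑ j : Fin 3, A i j * u (τ t) j := by
      rw [Finset.mul_sum]; apply Finset.sum_congr rfl; intros; ring
    calc ρ t * u (τ t) i * (b - ∑ j : Fin 3, A i j * w t j)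
        = ρ t * u (τ t) i * (b - ∑ j : Fin 3, A i j * (ρ t * u (τ t) j)) := by
          congr 2; apply Finset.sum_congr rfl; intro j _; rw [hw t j]
      _ = _ := by rw [hsum]; ring
end

section
/- Assume φ ∈ (0,1), ω > 0, μ > 0, b > 0 and r := bφ − μ(1−φ) > 0; set l := e^{−μ(1−φ)ω} and ρ* := (1 − e^{μ(1−φ)ω − bφω})/(1 − e^{−bφω}). Suppose ρ : ℝ → ℝ satisfies ρ'(t) = b ρ(t)(1 − ρ(t)) at every t ∈ [0, φω], with ρ(t) > 0 on [0, φω], ρ(0) = l ρ* and ρ(φω) = ρ*. Then ∫₀^{φω} ρ(s) ds = (r/b)·ω. -/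
/-- The rescaled return time of the seasonal system: if `ρ` is a positive
solution of the logistic ODE on `[0, φω]` with `ρ 0 = l ρ*` and `ρ (φω) = ρ*`, then
`∫₀^{φω} ρ = (r/b) ω`. -/
theorem stmt_6 (φ ω μ b r l ρs : ℝ)
    (hφ0 : 0 < φ) (hφ1 : φ < 1) (hω : 0 < ω) (hμ : 0 < μ) (hb : 0 < b)
    (hr : r = b * φ - μ * (1 - φ)) (hrpos : 0 < r)
    (hl : l = Real.exp (-(μ * (1 - φ) * ω)))
    (hρs : ρs = (1 - Real.exp (μ * (1 - φ) * ω - b * φ * ω)) /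
      (1 - Real.exp (-(b * φ * ω))))
    (ρ : ℝ → ℝ)
    (hρ : ∀ t ∈ Set.Icc (0 : ℝ) (φ * ω), HasDerivAt ρ (b * ρ t * (1 - ρ t)) t)
    (hpos : ∀ t ∈ Set.Icc (0 : ℝ) (φ * ω), 0 < ρ t)
    (h0 : ρ 0 = l * ρs) (hend : ρ (φ * ω) = ρs) :
    ∫ s in (0:ℝ)..(φ * ω), ρ s = r / b * ω := by
  have hφω : 0 < φ * ω := mul_pos hφ0 hω
  have hmem1 : φ * ω ∈ Set.Icc (0:ℝ) (φ * ω) := ⟨hφω.le, le_refl _⟩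
  have hρspos : 0 < ρs := hend ▸ hpos _ hmem1
  have hlpos : 0 < l := hl ▸ Real.exp_pos _
  have hcont : ContinuousOn ρ (Set.Icc (0:ℝ) (φ * ω)) :=
    fun t ht => ((hρ t ht).continuousAt).continuousWithinAt
  have hρInt : IntervalIntegrable ρ MeasureTheory.volume 0 (φ * ω) := by
    apply ContinuousOn.intervalIntegrable
    rwa [Set.uIcc_of_le hφω.le]
  have hderiv : ∀ t ∈ Set.Icc (0:ℝ) (φ * ω),
      HasDerivAt (fun t => Real.log (ρ t)) (b * (1 - ρ t)) t := by
    intro t ht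
    have h := (hρ t ht).log (ne_of_gt (hpos t ht))
    convert h using 1
    field_simp [(hpos t ht).ne']
  have hInt : IntervalIntegrable (fun t => b * (1 - ρ t)) MeasureTheory.volume 0 (φ * ω) := by
    apply ContinuousOn.intervalIntegrable
    rw [Set.uIcc_of_le hφω.le]
    exact continuousOn_const.mul (continuousOn_const.sub hcont)
  have key : ∫ t in (0:ℝ)..(φ * ω), b * (1 - ρ t)
      = Real.log (ρ (φ * ω)) - Real.log (ρ 0) := by
    exact intervalIntegral.integral_eq_sub_of_hasDerivAt
      (fun t ht => hderiv t (Set.uIcc_of_le hφω.le ▸ ht)) hInt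
  have hL : ∫ t in (0:ℝ)..(φ * ω), b * (1 - ρ t)
      = b * (φ * ω) - b * ∫ s in (0:ℝ)..(φ * ω), ρ s := by
    have heq : (fun t => b * (1 - ρ t)) = fun t => b - b * ρ t := by
      funext t; ring
    rw [heq, intervalIntegral.integral_sub intervalIntegrable_const (hρInt.const_mul b),
        intervalIntegral.integral_const, intervalIntegral.integral_const_mul]
    simp [mul_comm]
  have hR : Real.log (ρ (φ * ω)) - Real.log (ρ 0) = μ * (1 - φ) * ω := by
    rw [hend, h0, Real.log_mul hlpos.ne' hρspos.ne', hl, Real.log_exp]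
    ring
  have hmain : b * (φ * ω) - b * ∫ s in (0:ℝ)..(φ * ω), ρ s = μ * (1 - φ) * ω := by
    rw [← hL, key, hR]
  field_simp
  nlinarith [hmain]
end

section
/- Assume φ ∈ (0,1), ω > 0, μ > 0, b > 0 and r := bφ − μ(1−φ) > 0; set ρ* := (1 − e^{μ(1−φ)ω − bφω})/(1 − e^{−bφω}). Let A = (a_{ij}) be a real 3×3 matrix, let x ∈ ℝ³, and suppose u : ℝ → ℝ³ satisfies the Lotka–Volterra competition system at every t ∈ [0, (r/b)ω] with u(0) = x/ρ* (componentwise). Then there exists a continuous v : [0, ω] → ℝ³ with v(0) = x, such that each component of v has derivative −μ·v_i(t) at every t ∈ (0, (1−φ)ω), v satisfies the Lotka–Volterra competition system at every t ∈ ((1−φ)ω, ω), and v(ω) = ρ*·u((r/b)ω). (That is, the Poincaré map of the Lotka–Volterra system with seasonal succession satisfies P(x) = ρ*·Φ((r/b)ω, x/ρ*), where Φ is the flow of the autonomous system.) -/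
/-!
The equal-rate Lotka–Volterra system is invariant under the time-dependent rescaling
`v t = c t • u (s t)` whenever `c' = b c (1 - c)` and `s' = c`: the term `b c (1 - c) u` coming
from `c'` exactly compensates the change of time in `u`. During the death phase the state is
multiplied by `e^{-μ(1-φ)ω}`; continuing from there with the logistic solution started at
`c₀ = e^{-μ(1-φ)ω} ρ*` and its integral `s`, at the end of the season `c = ρ*` and `s = (r/b) ω`.
-/

open Real Set

namespace LotkaVolterra

theorem hasDerivAt_mul_comp_of_logistic {ι : Type*} [Fintype ι] (A : Matrix ι ι ℝ) {b : ℝ}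
    {u : ℝ → ι → ℝ} {c s : ℝ → ℝ} {t : ℝ}
    (hu : ∀ i, HasDerivAt (fun σ => u σ i) (u (s t) i * (b - ∑ j, A i j * u (s t) j)) (s t))
    (hc : HasDerivAt c (b * c t * (1 - c t)) t) (hs : HasDerivAt s (c t) t) (i : ι) :
    HasDerivAt (fun τ => c τ * u (s τ) i)
      (c t * u (s t) i * (b - ∑ j, A i j * (c t * u (s t) j))) t := by
  refine (hc.mul ((hu i).comp t hs)).congr_deriv ?_
  simp only [Function.comp_apply, mul_left_comm _ (c t), ← Finset.mul_sum]
  ring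

noncomputable def logistic (b c₀ τ : ℝ) : ℝ := c₀ * exp (b * τ) / (1 - c₀ + c₀ * exp (b * τ))

noncomputable def logisticIntegral (b c₀ τ : ℝ) : ℝ := log (1 - c₀ + c₀ * exp (b * τ)) / b

section Logistic

variable {c₀ : ℝ}

@[simp] theorem logistic_zero (b c₀ : ℝ) : logistic b c₀ 0 = c₀ := by simp [logistic]

@[simp] theorem logisticIntegral_zero (b c₀ : ℝ) : logisticIntegral b c₀ 0 = 0 := by
  simp [logisticIntegral]

theorem logistic_denom_pos (h₀ : 0 ≤ c₀) (h₁ : c₀ ≤ 1) (b τ : ℝ) :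
    0 < 1 - c₀ + c₀ * exp (b * τ) := by
  rcases h₀.eq_or_lt with rfl | hc₀
  · simp
  · nlinarith [mul_pos hc₀ (exp_pos (b * τ))]

theorem hasDerivAt_logistic (h₀ : 0 ≤ c₀) (h₁ : c₀ ≤ 1) (b τ : ℝ) :
    HasDerivAt (logistic b c₀) (b * logistic b c₀ τ * (1 - logistic b c₀ τ)) τ := by
  have hE : HasDerivAt (fun τ => c₀ * exp (b * τ)) (c₀ * (exp (b * τ) * b)) τ :=
    (((hasDerivAt_id τ).const_mul b).exp.const_mul c₀).congr_deriv (by simp)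
  have hD := logistic_denom_pos h₀ h₁ b τ
  refine (hE.div (hE.const_add (1 - c₀)) hD.ne').congr_deriv ?_
  unfold logistic
  field_simp

theorem hasDerivAt_logisticIntegral (h₀ : 0 ≤ c₀) (h₁ : c₀ ≤ 1) {b : ℝ} (hb : b ≠ 0) (τ : ℝ) :
    HasDerivAt (logisticIntegral b c₀) (logistic b c₀ τ) τ := by
  have hE : HasDerivAt (fun τ => 1 - c₀ + c₀ * exp (b * τ)) (c₀ * (exp (b * τ) * b)) τ :=
    (((hasDerivAt_id τ).const_mul b).exp.const_mul c₀).const_add (1 - c₀) |>.congr_deriv (by simp)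
  refine ((hE.log (logistic_denom_pos h₀ h₁ b τ).ne').div_const b).congr_deriv ?_
  unfold logistic
  field_simp

theorem monotone_logisticIntegral (h₀ : 0 ≤ c₀) (h₁ : c₀ ≤ 1) {b : ℝ} (hb : 0 < b) :
    Monotone (logisticIntegral b c₀) := fun τ σ hτσ => by
  unfold logisticIntegral
  gcongr
  exact logistic_denom_pos h₀ h₁ b τ

theorem hasDerivAt_logistic_mul_comp_logisticIntegral {ι : Type*} [Fintype ι]
    (A : Matrix ι ι ℝ) {b c₀ d g t : ℝ} (hb : 0 < b) (h₀ : 0 ≤ c₀) (h₁ : c₀ ≤ 1)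
    {u : ℝ → ι → ℝ} (hu : ∀ σ ∈ Icc 0 (logisticIntegral b c₀ g), ∀ i,
      HasDerivAt (fun s => u s i) (u σ i * (b - ∑ j, A i j * u σ j)) σ)
    (ht : t ∈ Icc d (d + g)) (i : ι) :
    HasDerivAt (fun s => logistic b c₀ (s - d) * u (logisticIntegral b c₀ (s - d)) i)
      (logistic b c₀ (t - d) * u (logisticIntegral b c₀ (t - d)) i *
        (b - ∑ j, A i j * (logistic b c₀ (t - d) * u (logisticIntegral b c₀ (t - d)) j))) t := by
  have hs : logisticIntegral b c₀ (t - d) ∈ Icc 0 (logisticIntegral b c₀ g) := by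
    rw [← logisticIntegral_zero b c₀]
    exact ⟨monotone_logisticIntegral h₀ h₁ hb (by linarith [ht.1]),
      monotone_logisticIntegral h₀ h₁ hb (by linarith [ht.2])⟩
  exact hasDerivAt_mul_comp_of_logistic A (c := fun s => logistic b c₀ (s - d))
    (s := fun s => logisticIntegral b c₀ (s - d)) (hu _ hs)
    ((hasDerivAt_logistic h₀ h₁ b (t - d)).comp_sub_const t d)
    ((hasDerivAt_logisticIntegral h₀ h₁ hb.ne' (t - d)).comp_sub_const t d) i

end Logistic

/-- The paper's `ρ*`, for a death phase of length `d = (1 - φ) ω` and a Lotka–Volterra phase of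
length `g = φ ω`. -/
noncomputable def seasonalFactor (b μ d g : ℝ) : ℝ :=
  (1 - exp (μ * d - b * g)) / (1 - exp (-(b * g)))

section SeasonalFactor

variable {b μ d g : ℝ}

theorem seasonalFactor_pos (h : μ * d < b * g) (hbg : 0 < b * g) : 0 < seasonalFactor b μ d g := by
  unfold seasonalFactor
  apply div_pos <;> rw [sub_pos, exp_lt_one_iff] <;> linarith

theorem exp_mul_seasonalFactor :
    exp (-(μ * d)) * seasonalFactor b μ d g
      = (exp (-(μ * d)) - exp (-(b * g))) / (1 - exp (-(b * g))) := by
  rw [seasonalFactor, mul_div_assoc', mul_sub, mul_one, ← exp_add]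
  ring_nf

theorem logistic_denom_seasonal (hbg : 0 < b * g) :
    1 - exp (-(μ * d)) * seasonalFactor b μ d g
        + exp (-(μ * d)) * seasonalFactor b μ d g * exp (b * g) = exp (b * g - μ * d) := by
  have hE : exp (b * g) - 1 ≠ 0 := (sub_pos.2 (one_lt_exp_iff.2 hbg)).ne'
  rw [exp_mul_seasonalFactor, exp_neg, exp_neg, exp_sub]
  field_simp
  ring

theorem logistic_seasonal (hbg : 0 < b * g) :
    logistic b (exp (-(μ * d)) * seasonalFactor b μ d g) g = seasonalFactor b μ d g := by
  rw [logistic, logistic_denom_seasonal hbg, exp_sub, exp_neg]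
  field_simp

theorem logisticIntegral_seasonal (hbg : 0 < b * g) :
    logisticIntegral b (exp (-(μ * d)) * seasonalFactor b μ d g) g = (b * g - μ * d) / b := by
  rw [logisticIntegral, logistic_denom_seasonal hbg, log_exp]

theorem exp_mul_seasonalFactor_mem_Icc (hμd : 0 ≤ μ * d) (h : μ * d < b * g) :
    exp (-(μ * d)) * seasonalFactor b μ d g ∈ Icc 0 1 := by
  have hbg : 0 < b * g := hμd.trans_lt h
  refine ⟨(mul_pos (exp_pos _) (seasonalFactor_pos h hbg)).le, ?_⟩
  rw [exp_mul_seasonalFactor, div_le_one (sub_pos.2 (exp_lt_one_iff.2 (neg_neg_of_pos hbg)))]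
  linarith [exp_le_one_iff.2 (neg_nonpos.2 hμd)]

end SeasonalFactor

theorem continuousOn_Icc_ite_le {E : Type*} [TopologicalSpace E] {f g : ℝ → E} {a m e : ℝ}
    (ham : a ≤ m) (hme : m ≤ e) (hf : ContinuousOn f (Icc a m)) (hg : ContinuousOn g (Icc m e))
    (hfg : f m = g m) : ContinuousOn (fun t => if t ≤ m then f t else g t) (Icc a e) := by
  rw [← Icc_union_Icc_eq_Icc ham hme]
  refine (hf.congr fun t ht => if_pos ht.2).union_of_isClosed (hg.congr fun t ht => ?_)
    isClosed_Icc isClosed_Icc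
  rcases ht.1.eq_or_lt with rfl | hlt
  · simp [hfg]
  · exact if_neg hlt.not_ge

theorem exists_seasonal_solution {ι : Type*} [Fintype ι] (A : Matrix ι ι ℝ) {b μ d g : ℝ}
    (hb : 0 < b) (hμ : 0 ≤ μ) (hd : 0 ≤ d) (hdg : μ * d < b * g) (x : ι → ℝ) {u : ℝ → ι → ℝ}
    (hu : ∀ σ ∈ Icc 0 ((b * g - μ * d) / b), ∀ i,
      HasDerivAt (fun s => u s i) (u σ i * (b - ∑ j, A i j * u σ j)) σ)
    (hu0 : ∀ i, u 0 i = x i / seasonalFactor b μ d g) :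
    ∃ v : ℝ → ι → ℝ,
      ContinuousOn v (Icc 0 (d + g)) ∧
      (∀ i, v 0 i = x i) ∧
      (∀ t ∈ Ioo 0 d, ∀ i, HasDerivAt (fun s => v s i) (-μ * v t i) t) ∧
      (∀ t ∈ Ioo d (d + g), ∀ i,
        HasDerivAt (fun s => v s i) (v t i * (b - ∑ j, A i j * v t j)) t) ∧
      ∀ i, v (d + g) i = seasonalFactor b μ d g * u ((b * g - μ * d) / b) i := by
  have hμd : 0 ≤ μ * d := mul_nonneg hμ hd
  have hbg : 0 < b * g := hμd.trans_lt hdg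
  have hg : 0 < g := pos_of_mul_pos_right hbg hb.le
  set ρ := seasonalFactor b μ d g
  set c₀ := exp (-(μ * d)) * ρ
  obtain ⟨hc₀0, hc₀1⟩ : c₀ ∈ Icc 0 1 := exp_mul_seasonalFactor_mem_Icc hμd hdg
  set w : ℝ → ι → ℝ := fun t i => logistic b c₀ (t - d) * u (logisticIntegral b c₀ (t - d)) i
  have hw : ∀ t ∈ Icc d (d + g), ∀ i,
      HasDerivAt (fun s => w s i) (w t i * (b - ∑ j, A i j * w t j)) t := by
    rw [← logisticIntegral_seasonal hbg] at hu
    exact fun t ht => hasDerivAt_logistic_mul_comp_logisticIntegral A hb hc₀0 hc₀1 hu ht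
  have hwd : w d = fun i => exp (-μ * d) * x i := by
    have hρ : ρ ≠ 0 := (seasonalFactor_pos hdg hbg).ne'
    ext i
    simp only [w, sub_self, logistic_zero, logisticIntegral_zero, hu0, c₀]
    field_simp
  set v : ℝ → ι → ℝ := fun t => if t ≤ d then fun i => exp (-μ * t) * x i else w t
  have hvw : ∀ t, d < t → v t = w t := fun t ht => if_neg ht.not_ge
  refine ⟨v, ?_, fun i => by simp [v, hd], ?_, ?_, fun i => ?_⟩
  · refine continuousOn_Icc_ite_le hd (le_add_of_nonneg_right hg.le) (by fun_prop) ?_ hwd.symm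
    exact continuousOn_pi.2 fun i t ht => (hw t ht i).continuousAt.continuousWithinAt
  · intro t ht i
    have hev : (fun s => v s i) =ᶠ[nhds t] fun s => exp (-μ * s) * x i := by
      filter_upwards [Iio_mem_nhds ht.2] with s hs
      simp [v, (mem_Iio.1 hs).le]
    have hvt : v t i = exp (-μ * t) * x i := by simp [v, ht.2.le]
    refine (((hasDerivAt_id t).const_mul (-μ)).exp.mul_const (x i)).congr_of_eventuallyEq hev
      |>.congr_deriv ?_
    rw [hvt, id, mul_one]
    ring
  · intro t ht i
    have hev : (fun s => v s i) =ᶠ[nhds t] fun s => w s i := by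
      filter_upwards [Ioi_mem_nhds ht.1] with s hs
      rw [hvw s hs]
    rw [hvw t ht.1]
    exact (hw t (Ioo_subset_Icc_self ht) i).congr_of_eventuallyEq hev
  · rw [hvw _ (lt_add_of_pos_right d hg)]
    simp only [w, add_sub_cancel_left, c₀, ρ, logistic_seasonal hbg, logisticIntegral_seasonal hbg]

end LotkaVolterra

theorem stmt_7_general (φ ω μ b r ρs : ℝ)
    (hφ1 : φ < 1) (hω : 0 < ω) (hμ : 0 < μ) (hb : 0 < b)
    (hr : r = b * φ - μ * (1 - φ)) (hrpos : 0 < r)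
    (hρs : ρs = (1 - Real.exp (μ * (1 - φ) * ω - b * φ * ω)) /
      (1 - Real.exp (-(b * φ * ω))))
    (A : Matrix (Fin 3) (Fin 3) ℝ) (x : Fin 3 → ℝ) (u : ℝ → Fin 3 → ℝ)
    (hu : ∀ t ∈ Set.Icc (0 : ℝ) (r / b * ω), ∀ i : Fin 3,
      HasDerivAt (fun s => u s i) (u t i * (b - ∑ j : Fin 3, A i j * u t j)) t)
    (hu0 : ∀ i : Fin 3, u 0 i = x i / ρs) :
    ∃ v : ℝ → Fin 3 → ℝ,
      ContinuousOn v (Set.Icc 0 ω) ∧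
      (∀ i : Fin 3, v 0 i = x i) ∧
      (∀ t ∈ Set.Ioo (0 : ℝ) ((1 - φ) * ω), ∀ i : Fin 3,
        HasDerivAt (fun s => v s i) (-μ * v t i) t) ∧
      (∀ t ∈ Set.Ioo ((1 - φ) * ω) ω, ∀ i : Fin 3,
        HasDerivAt (fun s => v s i) (v t i * (b - ∑ j : Fin 3, A i j * v t j)) t) ∧
      (∀ i : Fin 3, v ω i = ρs * u (r / b * ω) i) := by
  have hd : 0 ≤ (1 - φ) * ω := mul_nonneg (by linarith) hω.le
  have hdg : μ * ((1 - φ) * ω) < b * (φ * ω) := by nlinarith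
  have hT : r / b * ω = (b * (φ * ω) - μ * ((1 - φ) * ω)) / b := by
    rw [hr]
    field_simp
  have hρ : ρs = LotkaVolterra.seasonalFactor b μ ((1 - φ) * ω) (φ * ω) := by
    simp only [hρs, LotkaVolterra.seasonalFactor, mul_assoc]
  have hω' : (1 - φ) * ω + φ * ω = ω := by ring
  rw [hT] at hu ⊢
  rw [hρ] at hu0 ⊢
  simpa only [hω'] using LotkaVolterra.exists_seasonal_solution A hb hμ.le hd hdg x hu hu0

/-- Factorization of the Poincaré map of the seasonal Lotka–Volterra system:
`P x = ρ* • Φ((r/b)ω, x/ρ*)`. If `u` solves the Lotka–Volterra system on `[0, (r/b)ω]`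
with `u 0 = x/ρ*`, then there is a continuous `v` on `[0, ω]` with `v 0 = x`, solving the
death phase `vᵢ' = -μ vᵢ` on `(0, (1-φ)ω)` and the Lotka–Volterra phase on `((1-φ)ω, ω)`,
such that `v ω = ρ* • u((r/b)ω)`. -/
theorem stmt_7 (φ ω μ b r ρs : ℝ)
    (hφ0 : 0 < φ) (hφ1 : φ < 1) (hω : 0 < ω) (hμ : 0 < μ) (hb : 0 < b)
    (hr : r = b * φ - μ * (1 - φ)) (hrpos : 0 < r)
    (hρs : ρs = (1 - Real.exp (μ * (1 - φ) * ω - b * φ * ω)) /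
      (1 - Real.exp (-(b * φ * ω))))
    (A : Matrix (Fin 3) (Fin 3) ℝ) (x : Fin 3 → ℝ) (u : ℝ → Fin 3 → ℝ)
    (hu : ∀ t ∈ Set.Icc (0 : ℝ) (r / b * ω), ∀ i : Fin 3,
      HasDerivAt (fun s => u s i) (u t i * (b - ∑ j : Fin 3, A i j * u t j)) t)
    (hu0 : ∀ i : Fin 3, u 0 i = x i / ρs) :
    ∃ v : ℝ → Fin 3 → ℝ,
      ContinuousOn v (Set.Icc 0 ω) ∧
      (∀ i : Fin 3, v 0 i = x i) ∧
      (∀ t ∈ Set.Ioo (0 : ℝ) ((1 - φ) * ω), ∀ i : Fin 3,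
        HasDerivAt (fun s => v s i) (-μ * v t i) t) ∧
      (∀ t ∈ Set.Ioo ((1 - φ) * ω) ω, ∀ i : Fin 3,
        HasDerivAt (fun s => v s i) (v t i * (b - ∑ j : Fin 3, A i j * v t j)) t) ∧
      (∀ i : Fin 3, v ω i = ρs * u (r / b * ω) i) :=
  stmt_7_general φ ω μ b r ρs hφ1 hω hμ hb hr hrpos hρs A x u hu hu0
end

section
/- Assume φ ∈ (0,1), ω > 0, μ > 0, b > 0 and r := bφ − μ(1−φ) > 0; set ρ* := (1 − e^{μ(1−φ)ω − bφω})/(1 − e^{−bφω}). Let A = (a_{ij}) be a real 3×3 matrix, let x ∈ ℝ³, and suppose u : ℝ → ℝ³ satisfies the Lotka–Volterra competition system at every t ∈ [0, (r/b)ω] with u(0) = x/ρ* (componentwise). Suppose v : [0, ω] → ℝ³ is continuous with v(0) = x, each component of v has derivative −μ·v_i(t) at every t ∈ (0, (1−φ)ω), and v satisfies the Lotka–Volterra competition system at every t ∈ ((1−φ)ω, ω). Then necessarily v(ω) = ρ*·u((r/b)ω). In particular, x is the initial value of an ω-periodic solution of the seasonal system (v(ω) = v(0) = x) if and only if ρ*·u((r/b)ω)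 = x, i.e., if and only if x/ρ* is either an equilibrium of the autonomous system or lies on a periodic orbit admitting (r/b)ω as a period. -/
/-!
In the death phase every component decays by the factor `l = e^{-μ(1-φ)ω}`, so `v((1-φ)ω) = l x`.
The Lotka–Volterra system is invariant under a logistic time change: if `u` solves it, `ρ` solves
`ρ' = bρ(1-ρ)` and `τ' = ρ`, then `ρ · u ∘ τ` solves it as well. Starting the logistic at
`ρ((1-φ)ω) = l ρ*` makes `ρ · u ∘ τ` start at `l x`, and an explicit computation gives
`ρ(ω) = ρ*` and `τ(ω) = (r/b)ω`. Uniqueness for the locally Lipschitz vector field identifies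
`v` with `ρ · u ∘ τ` on `[(1-φ)ω, ω]`.
-/

open Real Set Filter Topology Matrix

section Autonomous

variable {E : Type*} [NormedAddCommGroup E] [NormedSpace ℝ E] {a b : ℝ}

theorem hasDerivWithinAt_Ici_of_hasDerivAt_Ioo {F : E → E} {f : ℝ → E} (hab : a < b)
    (hF : Continuous F) (hf : ContinuousOn f (Icc a b))
    (hf' : ∀ t ∈ Ioo a b, HasDerivAt f (F (f t)) t) :
    HasDerivWithinAt f (F (f a)) (Ici a) a := by
  have hfa : ContinuousWithinAt f (Ioo a b) a :=
    (hf a (left_mem_Icc.2 hab.le)).mono Ioo_subset_Icc_self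
  refine hasDerivWithinAt_Ici_of_tendsto_deriv
    (fun t ht => (hf' t ht).differentiableAt.differentiableWithinAt) hfa
    (Ioo_mem_nhdsGT hab) ?_
  have hlim : Tendsto (fun t => F (f t)) (𝓝[>] a) (𝓝 (F (f a))) := by
    rw [← nhdsWithin_Ioo_eq_nhdsGT hab]
    exact hF.continuousAt.tendsto.comp hfa
  refine hlim.congr' ?_
  filter_upwards [Ioo_mem_nhdsGT hab] with t ht
  exact (hf' t ht).deriv.symm

theorem eqOn_Icc_of_hasDerivAt_Ioo {F : E → E} {f g : ℝ → E} (hF : LocallyLipschitz F)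
    (hf : ContinuousOn f (Icc a b)) (hf' : ∀ t ∈ Ioo a b, HasDerivAt f (F (f t)) t)
    (hg : ContinuousOn g (Icc a b)) (hg' : ∀ t ∈ Ioo a b, HasDerivAt g (F (g t)) t)
    (ha : f a = g a) : EqOn f g (Icc a b) := by
  rcases le_or_gt b a with hba | hab
  · exact fun t ht => le_antisymm (ht.2.trans hba) ht.1 ▸ ha
  obtain ⟨K, hK⟩ := (hF.locallyLipschitzOn (s := f '' Icc a b ∪ g '' Icc a b))
    |>.exists_lipschitzOnWith_of_compact
      ((isCompact_Icc.image_of_continuousOn hf).union (isCompact_Icc.image_of_continuousOn hg))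
  have hright {h : ℝ → E} (hh : ContinuousOn h (Icc a b))
      (hh' : ∀ t ∈ Ioo a b, HasDerivAt h (F (h t)) t) :
      ∀ t ∈ Ico a b, HasDerivWithinAt h (F (h t)) (Ici t) t := by
    rintro t ⟨hat, htb⟩
    rcases hat.eq_or_lt with rfl | hat
    · exact hasDerivWithinAt_Ici_of_hasDerivAt_Ioo hab hF.continuous hh hh'
    · exact (hh' t ⟨hat, htb⟩).hasDerivWithinAt
  exact ODE_solution_unique_of_mem_Icc_right (fun _ _ => hK) hf (hright hf hf')
    (fun t ht => .inl ⟨t, Ico_subset_Icc_self ht, rfl⟩) hg (hright hg hg')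
    (fun t ht => .inr ⟨t, Ico_subset_Icc_self ht, rfl⟩) ha

theorem eq_exp_smul_of_hasDerivAt_neg_smul {f : ℝ → E} {μ : ℝ} (hab : a ≤ b)
    (hf : ContinuousOn f (Icc a b)) (hf' : ∀ t ∈ Ioo a b, HasDerivAt f (-μ • f t) t) :
    f b = exp (-μ * (b - a)) • f a := by
  have hexp (t : ℝ) : HasDerivAt (fun s => exp (-μ * (s - a)) • f a)
      (-μ • exp (-μ * (t - a)) • f a) t := by
    refine ((((hasDerivAt_id' t).sub_const a).const_mul (-μ)).exp.smul_const (f a)).congr_deriv ?_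
    rw [smul_smul]
    ring_nf
  refine eqOn_Icc_of_hasDerivAt_Ioo (F := fun y => -μ • y)
    (lipschitzWith_smul (-μ)).locallyLipschitz hf hf'
    (fun t _ => (hexp t).continuousAt.continuousWithinAt) (fun t _ => hexp t) (by simp)
    (right_mem_Icc.2 hab)

end Autonomous

section LotkaVolterra

variable {ι : Type*} [Fintype ι] (A : Matrix ι ι ℝ) (b : ℝ)

noncomputable def lotkaVolterra (y : ι → ℝ) : ι → ℝ := fun i => y i * (b - (A *ᵥ y) i)

theorem contDiff_lotkaVolterra : ContDiff ℝ 1 (lotkaVolterra A b) := by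
  refine contDiff_pi.2 fun i => ?_
  simp only [lotkaVolterra, Matrix.mulVec, dotProduct]
  fun_prop

variable {A b}

theorem hasDerivAt_smul_comp_of_logistic {u : ℝ → ι → ℝ} {ρ τ : ℝ → ℝ} {t : ℝ}
    (hu : HasDerivAt u (lotkaVolterra A b (u (τ t))) (τ t))
    (hρ : HasDerivAt ρ (b * ρ t * (1 - ρ t)) t) (hτ : HasDerivAt τ (ρ t) t) :
    HasDerivAt (fun s => ρ s • u (τ s)) (lotkaVolterra A b (ρ t • u (τ t))) t := by
  refine (hρ.smul (hu.scomp t hτ)).congr_deriv ?_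
  ext i
  simp only [lotkaVolterra, Matrix.mulVec_smul, Function.comp_apply, Pi.add_apply, Pi.smul_apply,
    smul_eq_mul]
  ring

end LotkaVolterra

noncomputable def logisticDenom (ρ₀ b a t : ℝ) : ℝ := 1 - ρ₀ + ρ₀ * exp (b * (t - a))

noncomputable def logistic (ρ₀ b a t : ℝ) : ℝ := ρ₀ * exp (b * (t - a)) / logisticDenom ρ₀ b a t

noncomputable def logisticClock (ρ₀ b a t : ℝ) : ℝ := log (logisticDenom ρ₀ b a t) / b

section Logistic

variable {ρ₀ b a : ℝ}

@[simp] theorem logisticDenom_self : logisticDenom ρ₀ b a a = 1 := by simp [logisticDenom]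

@[simp] theorem logistic_self : logistic ρ₀ b a a = ρ₀ := by simp [logistic]

@[simp] theorem logisticClock_self : logisticClock ρ₀ b a a = 0 := by simp [logisticClock]

theorem logisticDenom_pos (h₀ : 0 ≤ ρ₀) (h₁ : ρ₀ ≤ 1) (t : ℝ) : 0 < logisticDenom ρ₀ b a t := by
  have := exp_pos (b * (t - a))
  rcases h₁.lt_or_eq with h₁ | rfl
  · unfold logisticDenom; nlinarith
  · simpa [logisticDenom]

theorem logistic_nonneg (h₀ : 0 ≤ ρ₀) (h₁ : ρ₀ ≤ 1) (t : ℝ) : 0 ≤ logistic ρ₀ b a t :=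
  div_nonneg (by positivity) (logisticDenom_pos h₀ h₁ t).le

theorem hasDerivAt_logisticDenom (t : ℝ) :
    HasDerivAt (logisticDenom ρ₀ b a) (b * (ρ₀ * exp (b * (t - a)))) t := by
  refine ((((hasDerivAt_id' t).sub_const a).const_mul b).exp.const_mul ρ₀ |>.const_add
    (1 - ρ₀)).congr_deriv ?_
  ring

theorem hasDerivAt_logistic (h₀ : 0 ≤ ρ₀) (h₁ : ρ₀ ≤ 1) (t : ℝ) :
    HasDerivAt (logistic ρ₀ b a) (b * logistic ρ₀ b a t * (1 - logistic ρ₀ b a t)) t := by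
  have hD := logisticDenom_pos (b := b) (a := a) h₀ h₁ t
  have hnum : HasDerivAt (fun s => ρ₀ * exp (b * (s - a))) (b * (ρ₀ * exp (b * (t - a)))) t := by
    refine ((((hasDerivAt_id' t).sub_const a).const_mul b).exp.const_mul ρ₀).congr_deriv ?_
    ring
  refine (hnum.div (hasDerivAt_logisticDenom t) hD.ne').congr_deriv ?_
  simp only [logistic]
  field_simp

theorem hasDerivAt_logisticClock (h₀ : 0 ≤ ρ₀) (h₁ : ρ₀ ≤ 1) (hb : b ≠ 0) (t : ℝ) :
    HasDerivAt (logisticClock ρ₀ b a) (logistic ρ₀ b a t) t := by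
  have hD := logisticDenom_pos (b := b) (a := a) h₀ h₁ t
  refine (((hasDerivAt_logisticDenom t).log hD.ne').div_const b).congr_deriv ?_
  simp only [logistic]
  field_simp

theorem monotone_logisticClock (h₀ : 0 ≤ ρ₀) (h₁ : ρ₀ ≤ 1) (hb : b ≠ 0) :
    Monotone (logisticClock ρ₀ b a) :=
  monotone_of_hasDerivAt_nonneg (hasDerivAt_logisticClock h₀ h₁ hb) (logistic_nonneg h₀ h₁)

end Logistic

section LotkaVolterraPhase

variable {ι : Type*} [Fintype ι] {A : Matrix ι ι ℝ} {b : ℝ}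

theorem eqOn_logistic_smul_of_lotkaVolterra {u v : ℝ → ι → ℝ} {ρ₀ a T : ℝ} (h₀ : 0 ≤ ρ₀)
    (h₁ : ρ₀ ≤ 1) (hb : b ≠ 0)
    (hu : ∀ t ∈ Icc 0 (logisticClock ρ₀ b a T), HasDerivAt u (lotkaVolterra A b (u t)) t)
    (hv : ContinuousOn v (Icc a T))
    (hv' : ∀ t ∈ Ioo a T, HasDerivAt v (lotkaVolterra A b (v t)) t) (hva : v a = ρ₀ • u 0) :
    EqOn v (fun t => logistic ρ₀ b a t • u (logisticClock ρ₀ b a t)) (Icc a T) := by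
  have hw : ∀ t ∈ Icc a T, HasDerivAt (fun t => logistic ρ₀ b a t • u (logisticClock ρ₀ b a t))
      (lotkaVolterra A b (logistic ρ₀ b a t • u (logisticClock ρ₀ b a t))) t := by
    intro t ht
    have hmono := monotone_logisticClock (a := a) h₀ h₁ hb
    have hclock : logisticClock ρ₀ b a t ∈ Icc 0 (logisticClock ρ₀ b a T) :=
      ⟨logisticClock_self (ρ₀ := ρ₀) (b := b) ▸ hmono ht.1, hmono ht.2⟩
    exact hasDerivAt_smul_comp_of_logistic (hu _ hclock) (hasDerivAt_logistic h₀ h₁ t)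
      (hasDerivAt_logisticClock h₀ h₁ hb t)
  exact eqOn_Icc_of_hasDerivAt_Ioo (contDiff_lotkaVolterra A b).locallyLipschitz hv hv'
    (fun t ht => (hw t ht).continuousAt.continuousWithinAt)
    (fun t ht => hw t (Ioo_subset_Icc_self ht)) (by simpa using hva)

end LotkaVolterraPhase

/-- `seasonalRatio (μ(1-φ)ω) (bφω)` is `ρ*`. -/
noncomputable def seasonalRatio (L B : ℝ) : ℝ := (1 - exp (L - B)) / (1 - exp (-B))

section Seasonal

variable {L B : ℝ}

theorem seasonalRatio_pos (hLB : L < B) (hB : 0 < B) : 0 < seasonalRatio L B :=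
  div_pos (by simpa using hLB) (by simpa using hB)

theorem exp_neg_mul_seasonalRatio :
    exp (-L) * seasonalRatio L B = (exp (-L) - exp (-B)) / (1 - exp (-B)) := by
  rw [seasonalRatio, ← mul_div_assoc, mul_sub, mul_one, ← exp_add]
  ring_nf

theorem exp_neg_mul_seasonalRatio_mem_Icc (hL : 0 ≤ L) (hLB : L ≤ B) (hB : 0 < B) :
    exp (-L) * seasonalRatio L B ∈ Icc 0 1 := by
  have hB' : 0 < 1 - exp (-B) := by simpa using hB
  rw [exp_neg_mul_seasonalRatio, mem_Icc, div_le_one hB']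
  refine ⟨div_nonneg (by simpa using hLB) hB'.le, ?_⟩
  have := exp_le_one_iff.2 (neg_nonpos.2 hL)
  linarith

variable {b a T : ℝ}

theorem logisticDenom_seasonal (hB : 0 < B) (hT : b * (T - a) = B) :
    logisticDenom (exp (-L) * seasonalRatio L B) b a T = exp (B - L) := by
  have hE : exp B - 1 ≠ 0 := by simpa [sub_eq_zero] using hB.ne'
  rw [logisticDenom, hT, exp_neg_mul_seasonalRatio, exp_sub, exp_neg, exp_neg]
  field_simp
  ring

theorem logisticClock_seasonal (hB : 0 < B) (hT : b * (T - a) = B) :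
    logisticClock (exp (-L) * seasonalRatio L B) b a T = (B - L) / b := by
  rw [logisticClock, logisticDenom_seasonal hB hT, log_exp]

theorem logistic_seasonal (hB : 0 < B) (hT : b * (T - a) = B) :
    logistic (exp (-L) * seasonalRatio L B) b a T = seasonalRatio L B := by
  rw [logistic, logisticDenom_seasonal hB hT, hT, mul_div_assoc, ← exp_sub, sub_sub_cancel,
    mul_right_comm, ← exp_add, neg_add_cancel, exp_zero, one_mul]

end Seasonal

/-- Uniqueness counterpart of the factorization of the seasonal Poincaré map:
any continuous `v` on `[0, ω]` with `v 0 = x` that solves the death phase on `(0, (1-φ)ω)`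
and the Lotka–Volterra phase on `((1-φ)ω, ω)` must end at `v ω = ρ* • u((r/b)ω)`, where
`u` solves the autonomous system with `u 0 = x/ρ*`.  In particular `x` is a fixed point of
the Poincaré map (`v ω = v 0 = x`) iff `ρ* • u((r/b)ω) = x`. -/
theorem stmt_8 (φ ω μ b r ρs : ℝ)
    (hφ0 : 0 < φ) (hφ1 : φ < 1) (hω : 0 < ω) (hμ : 0 < μ) (hb : 0 < b)
    (hr : r = b * φ - μ * (1 - φ)) (hrpos : 0 < r)
    (hρs : ρs = (1 - Real.exp (μ * (1 - φ) * ω - b * φ * ω)) /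
      (1 - Real.exp (-(b * φ * ω))))
    (A : Matrix (Fin 3) (Fin 3) ℝ) (x : Fin 3 → ℝ) (u : ℝ → Fin 3 → ℝ)
    (hu : ∀ t ∈ Set.Icc (0 : ℝ) (r / b * ω), ∀ i : Fin 3,
      HasDerivAt (fun s => u s i) (u t i * (b - ∑ j : Fin 3, A i j * u t j)) t)
    (hu0 : ∀ i : Fin 3, u 0 i = x i / ρs)
    (v : ℝ → Fin 3 → ℝ)
    (hvc : ContinuousOn v (Set.Icc 0 ω))
    (hv0 : ∀ i : Fin 3, v 0 i = x i)
    (hvdeath : ∀ t ∈ Set.Ioo (0 : ℝ) ((1 - φ) * ω), ∀ i : Fin 3,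
      HasDerivAt (fun s => v s i) (-μ * v t i) t)
    (hvLV : ∀ t ∈ Set.Ioo ((1 - φ) * ω) ω, ∀ i : Fin 3,
      HasDerivAt (fun s => v s i) (v t i * (b - ∑ j : Fin 3, A i j * v t j)) t) :
    (∀ i : Fin 3, v ω i = ρs * u (r / b * ω) i) ∧
      ((∀ i : Fin 3, v ω i = x i) ↔ (∀ i : Fin 3, ρs * u (r / b * ω) i = x i)) := by
  obtain rfl : ρs = seasonalRatio (μ * (1 - φ) * ω) (b * φ * ω) := hρs
  set L := μ * (1 - φ) * ω
  set B := b * φ * ω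
  have hB : 0 < B := by positivity
  have hLB : L < B := by nlinarith
  have hL : 0 ≤ L := mul_nonneg (mul_nonneg hμ.le (by linarith)) hω.le
  have hρ₀ := exp_neg_mul_seasonalRatio_mem_Icc hL hLB.le hB
  have hphase : b * (ω - (1 - φ) * ω) = B := by ring
  have hva : v ((1 - φ) * ω) = (exp (-L) * seasonalRatio L B) • u 0 := by
    have hdeath := eq_exp_smul_of_hasDerivAt_neg_smul (f := v) (a := 0) (by nlinarith)
      (hvc.mono (Icc_subset_Icc_right (by nlinarith))) fun t ht => hasDerivAt_pi.2 (hvdeath t ht)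
    have hx : v 0 = seasonalRatio L B • u 0 := funext fun i => by
      rw [hv0, Pi.smul_apply, hu0, smul_eq_mul, mul_div_cancel₀ _ (seasonalRatio_pos hLB hB).ne']
    rw [hdeath, hx, smul_smul, sub_zero, neg_mul, ← mul_assoc]
  have hclock : logisticClock (exp (-L) * seasonalRatio L B) b ((1 - φ) * ω) ω = r / b * ω := by
    rw [logisticClock_seasonal hB hphase, hr]
    field_simp
    simp only [B, L]
    ring
  have hvω := eqOn_logistic_smul_of_lotkaVolterra hρ₀.1 hρ₀.2 hb.ne'
    (fun t ht => hasDerivAt_pi.2 (hu t (hclock ▸ ht)))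
    (hvc.mono (Icc_subset_Icc_left (by nlinarith)))
    (fun t ht => hasDerivAt_pi.2 (hvLV t ht)) hva (right_mem_Icc.2 (by nlinarith))
  simp only [hclock, logistic_seasonal hB hphase] at hvω
  have main : ∀ i, v ω i = seasonalRatio L B * u (r / b * ω) i := fun i => congrFun hvω i
  exact ⟨main, by simp only [main]⟩
end

section
/- Let A = (a_{ij}) be a real 3×3 matrix with det A ≠ 0, let b ∈ ℝ, and let x = (x₁, x₂, x₃) ∈ ℝ³ with (A x)_i = b for i = 1, 2, 3. Define α₁ := a₂₂ − a₁₂, α₂ := a₃₃ − a₂₃, α₃ := a₁₁ − a₃₁, β₁ := a₁₃ − a₃₃, β₂ := a₂₁ − a₁₁, β₃ := a₃₂ − a₂₂, and ζ := β₁β₂β₃ − α₁α₂α₃. Then (b − (a₁₁x₁ + a₂₂x₂ + a₃₃x₃))·det A = b·ζ. Consequently, the sum λ₁ + λ₂ of the two eigenvalues of the Jacobian M = −diag(x)·A other than −b equals (b/det A)·ζ. -/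
/-- With `α₁ = a₂₂-a₁₂, α₂ = a₃₃-a₂₃, α₃ = a₁₁-a₃₁, β₁ = a₁₃-a₃₃,
β₂ = a₂₁-a₁₁, β₃ = a₃₂-a₂₂` and `ζ = β₁β₂β₃ - α₁α₂α₃`, at a point `x` with `(A x)ᵢ = b`
one has `(b - (a₁₁x₁ + a₂₂x₂ + a₃₃x₃)) det A = b ζ`; consequently the sum `λ₁ + λ₂` of
the two eigenvalues of the Jacobian `M = -diag(x)·A` other than `-b` equals
`(b / det A) ζ`. -/
theorem stmt_15 (A : Matrix (Fin 3) (Fin 3) ℝ) (hA : A.det ≠ 0) (b : ℝ) (x : Fin 3 → ℝ)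
    (hx : ∀ i : Fin 3, A.mulVec x i = b)
    (α₁ α₂ α₃ β₁ β₂ β₃ ζ : ℝ)
    (hα₁ : α₁ = A 1 1 - A 0 1) (hα₂ : α₂ = A 2 2 - A 1 2) (hα₃ : α₃ = A 0 0 - A 2 0)
    (hβ₁ : β₁ = A 0 2 - A 2 2) (hβ₂ : β₂ = A 1 0 - A 0 0) (hβ₃ : β₃ = A 2 1 - A 1 1)
    (hζ : ζ = β₁ * β₂ * β₃ - α₁ * α₂ * α₃) :
    (b - (A 0 0 * x 0 + A 1 1 * x 1 + A 2 2 * x 2)) * A.det = b * ζ ∧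
      b - (A 0 0 * x 0 + A 1 1 * x 1 + A 2 2 * x 2) = b / A.det * ζ := by
  have h0 := hx 0
  have h1 := hx 1
  have h2 := hx 2
  simp only [Matrix.mulVec, dotProduct, Fin.sum_univ_three] at h0 h1 h2
  have key : (b - (A 0 0 * x 0 + A 1 1 * x 1 + A 2 2 * x 2)) * A.det = b * ζ := by
    rw [Matrix.det_fin_three]
    subst hζ hα₁ hα₂ hα₃ hβ₁ hβ₂ hβ₃
    linear_combination (-((A 1 1*A 2 2-A 1 2*A 2 1)*A 0 0+(-(A 1 0*A 2 2-A 1 2*A 2 0))*A 1 1+(A 1 0*A 2 1-A 1 1*A 2 0)*A 2 2))*h0 + (-((-(A 0 1*A 2 2-A 0 2*A 2 1))*A 0 0+(A 0 0*A 2 2-A 0 2*A 2 0)*A 1 1+(-(A 0 0*A 2 1-A 0 1*A 2 0))*A 2 2))*h1 + (-((A 0 1*A 1 2-A 0 2*A 1 1)*A 0 0+(-(A 0 0*A 1 2-A 0 2*A 1 0))*A 1 1+(A 0 0*A 1 1-A 0 1*A 1 0)*A 2 2))*h2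
  refine ⟨key, ?_⟩
  field_simp
  linarith [key]
end

section
/- Let a_{ij} (i, j = 1, 2, 3) be real numbers with a₁₁, a₂₂, a₃₃ all nonzero, and let r ∈ ℝ. Define w_{ij} := r − a_{ji}·r/a_{ii} for i ≠ j, and ϑ := w₁₂w₂₃w₃₁ + w₂₁w₁₃w₃₂. Define α₁ := a₂₂ − a₁₂, α₂ := a₃₃ − a₂₃, α₃ := a₁₁ − a₃₁, β₁ := a₁₃ − a₃₃, β₂ := a₂₁ − a₁₁, β₃ := a₃₂ − a₂₂, and ζ := β₁β₂β₃ − α₁α₂α₃. Then a₁₁a₂₂a₃₃·ϑ = −r³·ζ. In particular, if r > 0 and a₁₁, a₂₂, a₃₃ > 0, then ϑ and ζ have opposite signs (ϑ > 0 ⟺ ζ < 0, ϑ = 0 ⟺ ζ = 0). -/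
/-- With `wᵢⱼ = r - aⱼᵢ r / aᵢᵢ` (for `i ≠ j`),
`ϑ = w₁₂w₂₃w₃₁ + w₂₁w₁₃w₃₂`, and `ζ = β₁β₂β₃ - α₁α₂α₃` as in the paper, one has
`a₁₁a₂₂a₃₃ ϑ = -r³ ζ`; in particular if `r > 0` and `a₁₁, a₂₂, a₃₃ > 0` then `ϑ` and `ζ`
have opposite signs: `ϑ > 0 ↔ ζ < 0` and `ϑ = 0 ↔ ζ = 0`. -/
theorem stmt_16 (A : Matrix (Fin 3) (Fin 3) ℝ)
    (h00 : A 0 0 ≠ 0) (h11 : A 1 1 ≠ 0) (h22 : A 2 2 ≠ 0)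
    (r : ℝ) (w : Fin 3 → Fin 3 → ℝ)
    (hw : ∀ i j : Fin 3, i ≠ j → w i j = r - A j i * r / A i i)
    (α₁ α₂ α₃ β₁ β₂ β₃ ζ ϑ : ℝ)
    (hα₁ : α₁ = A 1 1 - A 0 1) (hα₂ : α₂ = A 2 2 - A 1 2) (hα₃ : α₃ = A 0 0 - A 2 0)
    (hβ₁ : β₁ = A 0 2 - A 2 2) (hβ₂ : β₂ = A 1 0 - A 0 0) (hβ₃ : β₃ = A 2 1 - A 1 1)
    (hζ : ζ = β₁ * β₂ * β₃ - α₁ * α₂ * α₃)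
    (hϑ : ϑ = w 0 1 * w 1 2 * w 2 0 + w 1 0 * w 0 2 * w 2 1) :
    A 0 0 * A 1 1 * A 2 2 * ϑ = -(r ^ 3) * ζ ∧
      (0 < r → 0 < A 0 0 → 0 < A 1 1 → 0 < A 2 2 →
        ((0 < ϑ ↔ ζ < 0) ∧ (ϑ = 0 ↔ ζ = 0))) := by
  have key : A 0 0 * A 1 1 * A 2 2 * ϑ = -(r ^ 3) * ζ := by
    rw [hϑ, hw 0 1 (by decide), hw 1 2 (by decide), hw 2 0 (by decide),
      hw 1 0 (by decide), hw 0 2 (by decide), hw 2 1 (by decide),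
      hζ, hα₁, hα₂, hα₃, hβ₁, hβ₂, hβ₃]
    field_simp
    ring
  refine ⟨key, fun hr h0 h1 h2 => ?_⟩
  have hA : 0 < A 0 0 * A 1 1 * A 2 2 := by positivity
  have hr3 : 0 < r ^ 3 := by positivity
  constructor
  · constructor
    · intro h
      nlinarith [key]
    · intro h
      nlinarith [key]
  · constructor
    · intro h
      have : -(r^3) * ζ = 0 := by rw [← key, h]; ring
      rcases mul_eq_zero.1 this with h' | h'
      · nlinarith
      · exact h'
    · intro h
      have : A 0 0 * A 1 1 * A 2 2 * ϑ = 0 := by rw [key, h]; ring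
      rcases mul_eq_zero.1 this with h' | h'
      · nlinarith
      · exact h'
end

section
/- Let T > 0 and let J : [0, T] → (real 3×3 matrices) be continuous with J(t)_{ij} < 0 for all i ≠ j and all t ∈ [0, T]. Suppose W : [0, T] → (real 3×3 matrices) satisfies the matrix linear ODE W'(t) = J(t)·W(t) (entrywise) for all t ∈ [0, T], with W(0) equal to the identity matrix. Then W(T) is invertible and every entry of W(T)⁻¹ is strictly positive. -/
/-! Liouville's formula `(det W)' = tr J · det W` keeps `det W` positive, so `W T` is invertible
with `(W T)⁻¹ = (det W T)⁻¹ • adj (W T)`. Each row of `adj W` solves the linear system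
`y' = y (tr J • 1 - J)`, whose off-diagonal coefficients `-J k l` are positive. After an exponential
shift making all coefficients positive, such a system carries a nonzero nonnegative initial
vector (here a row of `adj 1 = 1`) strictly into the positive orthant: as long as `y ≥ 0` and one
coordinate stays positive, every coordinate has positive derivative. -/

open Set Filter Topology Matrix

theorem HasDerivAt.eventually_nhdsGT_lt {f : ℝ → ℝ} {f' x : ℝ} (hf : HasDerivAt f f' x)
    (hf' : 0 < f') : ∀ᶠ t in 𝓝[>] x, f x < f t := by
  filter_upwards [((hasDerivAt_iff_tendsto_slope.1 hf).mono_left (nhdsGT_le_nhdsNE x)).eventually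
    (eventually_gt_nhds hf'), self_mem_nhdsWithin] with t hslope hxt
  rw [slope_def_field, lt_div_iff₀ (sub_pos.2 hxt)] at hslope
  linarith

theorem HasDerivAt.eventually_nhdsLT_lt {f : ℝ → ℝ} {f' x : ℝ} (hf : HasDerivAt f f' x)
    (hf' : 0 < f') : ∀ᶠ t in 𝓝[<] x, f t < f x := by
  filter_upwards [((hasDerivAt_iff_tendsto_slope.1 hf).mono_left (nhdsLT_le_nhdsNE x)).eventually
    (eventually_gt_nhds hf'), self_mem_nhdsWithin] with t hslope htx
  rw [slope_comm, slope_def_field, lt_div_iff₀ (sub_pos.2 htx)] at hslope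
  linarith

section

variable {ι : Type*} [Fintype ι] {a b : ℝ} {y : ℝ → ι → ℝ} {B : ℝ → Matrix ι ι ℝ}

theorem forall_pos_of_hasDerivAt_vecMul_of_pos (hab : a < b)
    (hB : ∀ t ∈ Icc a b, ∀ k l, 0 < B t k l)
    (hy : ∀ t ∈ Icc a b, ∀ j, HasDerivAt (fun s => y s j) ((y t ᵥ* B t) j) t) (hya : 0 < y a) :
    ∀ j, 0 < y b j := by
  obtain ⟨hya, i, hi⟩ := Pi.lt_def.1 hya
  have hderiv : ∀ t ∈ Icc a b, 0 ≤ y t → 0 < y t i → ∀ j, 0 < (y t ᵥ* B t) j := fun t ht h0 hti j =>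
    calc 0 < y t i * B t i j := mul_pos hti (hB t ht i j)
      _ ≤ (y t ᵥ* B t) j := Finset.single_le_sum (f := fun k => y t k * B t k j)
          (fun k _ => mul_nonneg (h0 k) (hB t ht k j).le) (Finset.mem_univ i)
  -- Real induction on `C`: at each of its points every coordinate of `y` is strictly increasing.
  set C := {t | 0 ≤ y t ∧ y a i ≤ y t i}
  have hC : Icc a b ⊆ C := by
    refine IsClosed.Icc_subset_of_forall_mem_nhdsWithin ?_ ⟨hya, le_rfl⟩ ?_
    · rw [inter_comm]
      refine ContinuousOn.preimage_isClosed_of_isClosed (continuousOn_pi.2 fun j t ht =>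
        (hy t ht j).continuousAt.continuousWithinAt) isClosed_Icc
        ((isClosed_le continuous_const continuous_id).inter
          (isClosed_le continuous_const (continuous_apply i)))
    · rintro x ⟨⟨hx0, hxi⟩, hx⟩
      have hpos := hderiv x (Ico_subset_Icc_self hx) hx0 (hi.trans_le hxi)
      filter_upwards [eventually_all.2 fun j =>
        (hy x (Ico_subset_Icc_self hx) j).eventually_nhdsGT_lt (hpos j)] with t ht
      exact ⟨fun j => (hx0 j).trans (ht j).le, hxi.trans (ht i).le⟩
  intro j
  have hbC := hC (right_mem_Icc.2 hab.le)
  have hpos := hderiv b (right_mem_Icc.2 hab.le) hbC.1 (hi.trans_le hbC.2) j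
  obtain ⟨t, hlt, htab⟩ := ((hy b (right_mem_Icc.2 hab.le) j).eventually_nhdsLT_lt hpos).and
    (Ioo_mem_nhdsLT hab) |>.exists
  exact ((hC (Ioo_subset_Icc_self htab)).1 j).trans_lt hlt

theorem exists_forall_le_diag_of_continuousOn {s : Set ℝ} (hs : IsCompact s)
    (hB : ContinuousOn B s) : ∃ m, ∀ t ∈ s, ∀ k, m ≤ B t k k := by
  choose m hm using fun k => (hs.bddBelow_image (continuousOn_apply k _ |>.comp
    (continuousOn_apply k _ |>.comp hB (mapsTo_univ _ _)) (mapsTo_univ _ _)))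
  obtain ⟨m₀, hm₀⟩ := Finite.bddBelow_range m
  exact ⟨m₀, fun t ht k => (hm₀ ⟨k, rfl⟩).trans (hm k ⟨t, ht, rfl⟩)⟩

theorem forall_pos_of_hasDerivAt_vecMul [DecidableEq ι] (hab : a < b)
    (hBc : ContinuousOn B (Icc a b))
    (hB : ∀ t ∈ Icc a b, ∀ k l, k ≠ l → 0 < B t k l)
    (hy : ∀ t ∈ Icc a b, ∀ j, HasDerivAt (fun s => y s j) ((y t ᵥ* B t) j) t) (hya : 0 < y a) :
    ∀ j, 0 < y b j := by
  obtain ⟨m, hm⟩ := exists_forall_le_diag_of_continuousOn isCompact_Icc hBc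
  set c := 1 - m
  have hshift : ∀ t ∈ Icc a b, ∀ k l, 0 < (B t + c • 1) k l := by
    intro t ht k l
    rcases eq_or_ne k l with rfl | hkl
    · simp only [Matrix.add_apply, Matrix.smul_apply, one_apply_eq, smul_eq_mul, mul_one, c]
      linarith [hm t ht k]
    · simpa [one_apply_ne hkl] using hB t ht k l hkl
  have hz : ∀ t ∈ Icc a b, ∀ j, HasDerivAt (fun s => (Real.exp (c * s) • y s) j)
      (((Real.exp (c * t) • y t) ᵥ* (B t + c • 1)) j) t := by
    intro t ht j
    refine (((hasDerivAt_id' t).const_mul c).exp.mul (hy t ht j)).congr_deriv ?_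
    simp only [smul_vecMul, vecMul_add, vecMul_smul, vecMul_one, Pi.add_apply, Pi.smul_apply,
      smul_eq_mul]
    ring
  intro j
  have := forall_pos_of_hasDerivAt_vecMul_of_pos hab hshift hz (smul_pos (Real.exp_pos _) hya) j
  exact pos_of_mul_pos_right this (Real.exp_pos _).le

end

theorem pos_of_hasDerivAt_mul {a b : ℝ} {f g : ℝ → ℝ} (hab : a < b) (hg : ContinuousOn g (Icc a b))
    (hf : ∀ t ∈ Icc a b, HasDerivAt f (g t * f t) t) (hfa : 0 < f a) : 0 < f b := by
  refine forall_pos_of_hasDerivAt_vecMul (y := fun s (_ : Unit) => f s)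
    (B := fun t => of fun _ _ => g t) hab ?_ (fun _ _ k l hkl => absurd (Subsingleton.elim k l) hkl)
    (fun t ht _ => ?_) (Pi.lt_def.2 ⟨fun _ => hfa.le, (), hfa⟩) ()
  · exact continuousOn_pi.2 fun _ => continuousOn_pi.2 fun _ => hg
  · simpa [vecMul, dotProduct, mul_comm] using hf t ht

section

variable {W : ℝ → Matrix (Fin 3) (Fin 3) ℝ} {A : Matrix (Fin 3) (Fin 3) ℝ} {t : ℝ}

theorem hasDerivAt_det_fin_three
    (hW : ∀ i j, HasDerivAt (fun s => W s i j) ((A * W t) i j) t) :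
    HasDerivAt (fun s => (W s).det) (A.trace * (W t).det) t := by
  simp only [det_fin_three]
  refine HasDerivAt.congr_deriv
    ((((((((hW 0 0).fun_mul (hW 1 1)).fun_mul (hW 2 2)).fun_sub
      (((hW 0 0).fun_mul (hW 1 2)).fun_mul (hW 2 1))).fun_sub
      (((hW 0 1).fun_mul (hW 1 0)).fun_mul (hW 2 2))).fun_add
      (((hW 0 1).fun_mul (hW 1 2)).fun_mul (hW 2 0))).fun_add
      (((hW 0 2).fun_mul (hW 1 0)).fun_mul (hW 2 1))).fun_sub
      (((hW 0 2).fun_mul (hW 1 1)).fun_mul (hW 2 0))) ?_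
  simp only [mul_apply, Fin.sum_univ_three, trace_fin_three]
  ring

theorem hasDerivAt_adjugate_fin_three
    (hW : ∀ i j, HasDerivAt (fun s => W s i j) ((A * W t) i j) t) (i j : Fin 3) :
    HasDerivAt (fun s => (W s).adjugate i j) (((W t).adjugate i ᵥ* (A.trace • 1 - A)) j) t := by
  fin_cases i <;> fin_cases j <;>
    simp only [adjugate_fin_three, of_apply, cons_val', cons_val_zero, cons_val_one,
      cons_val_two, empty_val', cons_val_fin_one, Fin.zero_eta, Fin.mk_one, Fin.reduceFinMk] <;>
    (first
      | refine (((hW _ _).fun_mul (hW _ _)).fun_sub ((hW _ _).fun_mul (hW _ _))).congr_deriv ?_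
      | refine (((hW _ _).fun_mul (hW _ _)).fun_neg.fun_add
          ((hW _ _).fun_mul (hW _ _))).congr_deriv ?_) <;>
    simp only [vecMul, dotProduct, Fin.sum_univ_three, mul_apply, trace_fin_three, Matrix.sub_apply,
      Matrix.smul_apply, smul_eq_mul, one_apply, of_apply, cons_val', cons_val_zero, cons_val_one,
      cons_val, cons_val_fin_one, Fin.isValue, Fin.reduceEq, ↓reduceIte] <;>
    ring

end

/-- If `J : [0,T] → M₃(ℝ)` is continuous with strictly negative
off-diagonal entries and `W` solves the matrix variational equation `W' = J(t) W` on
`[0, T]` with `W 0 = I`, then `W T` is invertible and every entry of `(W T)⁻¹` is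
strictly positive. -/
theorem stmt_17 (T : ℝ) (hT : 0 < T) (J : ℝ → Matrix (Fin 3) (Fin 3) ℝ)
    (hJc : ContinuousOn J (Set.Icc 0 T))
    (hJoff : ∀ t ∈ Set.Icc (0 : ℝ) T, ∀ i j : Fin 3, i ≠ j → J t i j < 0)
    (W : ℝ → Matrix (Fin 3) (Fin 3) ℝ)
    (hW : ∀ t ∈ Set.Icc (0 : ℝ) T, ∀ i j : Fin 3,
      HasDerivAt (fun s => W s i j) ((J t * W t) i j) t)
    (hW0 : W 0 = 1) :
    IsUnit (W T) ∧ ∀ i j : Fin 3, 0 < (W T)⁻¹ i j := by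
  have htrace : ContinuousOn (fun t => (J t).trace) (Icc 0 T) :=
    continuous_id.matrix_trace.comp_continuousOn hJc
  have hdet : 0 < (W T).det :=
    pos_of_hasDerivAt_mul (f := fun s => (W s).det) hT htrace
      (fun t ht => hasDerivAt_det_fin_three (hW t ht)) (by simp [hW0])
  have hadj : ∀ i j, 0 < (W T).adjugate i j := fun i =>
    forall_pos_of_hasDerivAt_vecMul hT ((htrace.smul continuousOn_const).sub hJc)
      (fun t ht k l hkl => by simpa [one_apply_ne hkl] using hJoff t ht k l hkl)
      (fun t ht => hasDerivAt_adjugate_fin_three (hW t ht) i)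
      (by rw [hW0, adjugate_one]; exact Pi.lt_def.2 ⟨zero_le_one_row i, i, by simp⟩)
  refine ⟨(isUnit_iff_isUnit_det _).2 hdet.ne'.isUnit, fun i j => ?_⟩
  rw [inv_def, Ring.inverse_eq_inv', Matrix.smul_apply, smul_eq_mul]
  exact mul_pos (inv_pos.2 hdet) (hadj i j)
end
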